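/- arXiv:2510.07530 — 2 statements merged into one kernel-verified Lean document; each statement's English description precedes it below -/
import Mathlib

section
/- Let A be a nonzero polynomial over F₂ with Collatz sequences (A_j). Then there exist a natural number m and natural numbers ℓ and d with d = ℓ + 2 such that for every k ≥ m one has deg(A_{2k+1}) = ℓ, deg(A_{2k}) = d, a_{2k} = 1 and b_{2k} = 1. -/
/-!
For an odd polynomial `B`, the polynomial `1 + M₁ B` has degree `deg B + 2` and vanishes at `0`
and `1`, so its odd part has degree `deg B + 2 - a - b ≤ deg B`, where `a, b ≥ 1` are its
multiplicities of `x` and `x + 1`. Hence the degrees of the odd terms `A_{2k+1}` form a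
nonincreasing sequence of natural numbers, which is eventually constant; once it is constant,
`a + b = 2` forces `a = b = 1`.
-/

open Polynomial

/-- The analogue of 3 = first odd number > 1 : the first odd binary polynomial besides 1. -/
noncomputable def M1 : Polynomial (ZMod 2) := X ^ 2 + X + 1

/-- Valuation at `x` : multiplicity of the root 0. -/
noncomputable def valX (S : Polynomial (ZMod 2)) : ℕ := S.rootMultiplicity 0

/-- Valuation at `x + 1` : multiplicity of the root 1 (note `X - 1 = X + 1` in characteristic 2). -/
noncomputable def valX1 (S : Polynomial (ZMod 2)) : ℕ := S.rootMultiplicity 1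

/-- The odd part of a polynomial: `S / (x^{val_x S} (x+1)^{val_{x+1} S})`. -/
noncomputable def oddPart (S : Polynomial (ZMod 2)) : Polynomial (ZMod 2) :=
  S / (X ^ valX S * (X + 1) ^ valX1 S)

/-- The Collatz sequences `(A_j)` associated with `A`:
`A₀ = A`, `A_{2k+1} = oddPart (A_{2k})`, `A_{2k+2} = 1 + M₁ · A_{2k+1}`. -/
noncomputable def collatz (A : Polynomial (ZMod 2)) : ℕ → Polynomial (ZMod 2)
  | 0 => A
  | j + 1 => if j % 2 = 0 then oddPart (collatz A j) else 1 + M1 * collatz A j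

def IsOddPoly (S : (ZMod 2)[X]) : Prop := S.eval 0 = 1 ∧ S.eval 1 = 1

lemma IsOddPoly.ne_zero {S : (ZMod 2)[X]} (hS : IsOddPoly S) : S ≠ 0 := by
  rintro rfl
  simp [IsOddPoly] at hS

lemma Polynomial.not_isRoot_of_pow_rootMultiplicity_mul_eq {R : Type*} [CommRing R]
    {p q : R[X]} {a : R} (hp : p ≠ 0) (h : (X - C a) ^ p.rootMultiplicity a * q = p) :
    ¬ q.IsRoot a := by
  intro hq
  obtain ⟨r, rfl⟩ := dvd_iff_isRoot.mpr hq
  exact pow_rootMultiplicity_not_dvd hp a ⟨r, h.symm.trans (by ring)⟩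

lemma X_add_one_eq_X_sub_C_one : (X + 1 : (ZMod 2)[X]) = X - C 1 := by
  rw [CharTwo.sub_eq_add, map_one]

lemma Polynomial.X_add_one_ne_zero {R : Type*} [Semiring R] [Nontrivial R] :
    (X + 1 : R[X]) ≠ 0 := by
  simpa using X_add_C_ne_zero (1 : R)

lemma X_pow_valX_mul_X_add_one_pow_valX1_dvd (S : (ZMod 2)[X]) :
    X ^ valX S * (X + 1) ^ valX1 S ∣ S := by
  have hcop : IsCoprime (X : (ZMod 2)[X]) (X + 1) := ⟨-1, 1, by ring⟩
  refine hcop.pow.mul_dvd ?_ ?_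
  · simpa [valX] using pow_rootMultiplicity_dvd S 0
  · simpa [valX1, X_add_one_eq_X_sub_C_one] using pow_rootMultiplicity_dvd S 1

lemma X_pow_valX_mul_X_add_one_pow_valX1_mul_oddPart (S : (ZMod 2)[X]) :
    X ^ valX S * (X + 1) ^ valX1 S * oddPart S = S :=
  EuclideanDomain.mul_div_cancel' (mul_ne_zero (pow_ne_zero _ X_ne_zero)
    (pow_ne_zero _ X_add_one_ne_zero)) (X_pow_valX_mul_X_add_one_pow_valX1_dvd S)

lemma isOddPoly_oddPart {S : (ZMod 2)[X]} (hS : S ≠ 0) : IsOddPoly (oddPart S) := by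
  have hfac := X_pow_valX_mul_X_add_one_pow_valX1_mul_oddPart S
  have h0 : ¬ (oddPart S).IsRoot 0 := fun h => not_isRoot_of_pow_rootMultiplicity_mul_eq
    (q := (X + 1) ^ valX1 S * oddPart S) hS
    (Eq.trans (by rw [C_0, sub_zero, valX]; ring) hfac) (h.dvd (dvd_mul_left _ _))
  have h1 : ¬ (oddPart S).IsRoot 1 := fun h => not_isRoot_of_pow_rootMultiplicity_mul_eq
    (q := X ^ valX S * oddPart S) hS
    (Eq.trans (by rw [← X_add_one_eq_X_sub_C_one, valX1]; ring) hfac) (h.dvd (dvd_mul_left _ _))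
  exact ⟨Fin.eq_one_of_ne_zero _ h0, Fin.eq_one_of_ne_zero _ h1⟩

lemma natDegree_eq_valX_add_valX1_add_natDegree_oddPart {S : (ZMod 2)[X]} (hS : S ≠ 0) :
    S.natDegree = valX S + valX1 S + (oddPart S).natDegree := by
  have hfac := X_pow_valX_mul_X_add_one_pow_valX1_mul_oddPart S
  have hodd : oddPart S ≠ 0 := (isOddPoly_oddPart hS).ne_zero
  have hX1 : (X + 1 : (ZMod 2)[X]).natDegree = 1 := by compute_degree!
  conv_lhs => rw [← hfac]
  rw [natDegree_mul (mul_ne_zero (pow_ne_zero _ X_ne_zero) (pow_ne_zero _ X_add_one_ne_zero)) hodd,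
    natDegree_mul (pow_ne_zero _ X_ne_zero) (pow_ne_zero _ X_add_one_ne_zero),
    natDegree_pow, natDegree_pow, natDegree_X, hX1, mul_one, mul_one]

lemma natDegree_one_add_M1_mul {B : (ZMod 2)[X]} (hB : B ≠ 0) :
    (1 + M1 * B).natDegree = B.natDegree + 2 := by
  have hM1 : M1.natDegree = 2 := by unfold M1; compute_degree!
  have hdeg : (M1 * B).natDegree = B.natDegree + 2 := by
    rw [natDegree_mul (ne_zero_of_natDegree_gt (n := 0) (by omega)) hB, hM1, add_comm]
  rw [natDegree_add_eq_right_of_natDegree_lt (by rw [natDegree_one, hdeg]; omega), hdeg]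

lemma IsOddPoly.isRoot_one_add_M1_mul {B : (ZMod 2)[X]} (hB : IsOddPoly B) :
    (1 + M1 * B).IsRoot 0 ∧ (1 + M1 * B).IsRoot 1 := by
  obtain ⟨h0, h1⟩ := hB
  constructor <;> simp [M1, h0, h1] <;> decide

lemma one_add_M1_mul_ne_zero {B : (ZMod 2)[X]} (hB : B ≠ 0) : 1 + M1 * B ≠ 0 :=
  ne_zero_of_natDegree_gt (n := 0) (by rw [natDegree_one_add_M1_mul hB]; omega)

lemma collatz_two_mul_add_one (A : (ZMod 2)[X]) (k : ℕ) :
    collatz A (2 * k + 1) = oddPart (collatz A (2 * k)) := by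
  rw [collatz, if_pos (by omega)]

lemma collatz_two_mul_succ (A : (ZMod 2)[X]) (k : ℕ) :
    collatz A (2 * (k + 1)) = 1 + M1 * collatz A (2 * k + 1) := by
  rw [mul_add_one, collatz, if_neg (by omega)]

section collatz

variable {A : (ZMod 2)[X]}

lemma collatz_two_mul_ne_zero (hA : A ≠ 0) (k : ℕ) : collatz A (2 * k) ≠ 0 := by
  induction k with
  | zero => exact hA
  | succ k ih =>
    rw [collatz_two_mul_succ, collatz_two_mul_add_one]
    exact one_add_M1_mul_ne_zero (isOddPoly_oddPart ih).ne_zero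

lemma isOddPoly_collatz_two_mul_add_one (hA : A ≠ 0) (k : ℕ) :
    IsOddPoly (collatz A (2 * k + 1)) := by
  rw [collatz_two_mul_add_one]
  exact isOddPoly_oddPart (collatz_two_mul_ne_zero hA k)

lemma natDegree_collatz_two_mul (hA : A ≠ 0) (k : ℕ) :
    (collatz A (2 * k)).natDegree =
      valX (collatz A (2 * k)) + valX1 (collatz A (2 * k)) + (collatz A (2 * k + 1)).natDegree := by
  rw [collatz_two_mul_add_one]
  exact natDegree_eq_valX_add_valX1_add_natDegree_oddPart (collatz_two_mul_ne_zero hA k)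

lemma natDegree_collatz_two_mul_succ (hA : A ≠ 0) (k : ℕ) :
    (collatz A (2 * (k + 1))).natDegree = (collatz A (2 * k + 1)).natDegree + 2 := by
  rw [collatz_two_mul_succ]
  exact natDegree_one_add_M1_mul (isOddPoly_collatz_two_mul_add_one hA k).ne_zero

lemma one_le_valX_and_valX1_collatz_two_mul_succ (hA : A ≠ 0) (k : ℕ) :
    1 ≤ valX (collatz A (2 * (k + 1))) ∧ 1 ≤ valX1 (collatz A (2 * (k + 1))) := by
  have hne := collatz_two_mul_ne_zero hA (k + 1)
  obtain ⟨h0, h1⟩ := (isOddPoly_collatz_two_mul_add_one hA k).isRoot_one_add_M1_mul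
  rw [← collatz_two_mul_succ] at h0 h1
  exact ⟨(rootMultiplicity_pos hne).mpr h0, (rootMultiplicity_pos hne).mpr h1⟩

lemma antitone_natDegree_collatz_two_mul_add_one (hA : A ≠ 0) :
    Antitone fun k => (collatz A (2 * k + 1)).natDegree := by
  refine antitone_nat_of_succ_le fun k => ?_
  have := natDegree_collatz_two_mul hA (k + 1)
  have := natDegree_collatz_two_mul_succ hA k
  have := one_le_valX_and_valX1_collatz_two_mul_succ hA k
  omega

end collatz

/-- eventually the degrees stabilize: there are `m, ℓ, d` with `d = ℓ + 2` such
that for all `k ≥ m`, `deg A_{2k+1} = ℓ`, `deg A_{2k} = d`, `a_{2k} = 1` and `b_{2k} = 1`. -/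
theorem degrees_eventually_constant (A : Polynomial (ZMod 2)) (hA : A ≠ 0) :
    ∃ (m ℓ d : ℕ), d = ℓ + 2 ∧ ∀ k ≥ m,
      (collatz A (2 * k + 1)).natDegree = ℓ ∧ (collatz A (2 * k)).natDegree = d ∧
      valX (collatz A (2 * k)) = 1 ∧ valX1 (collatz A (2 * k)) = 1 := by
  obtain ⟨m, hm⟩ :=
    WellFoundedLT.antitone_chain_condition (antitone_natDegree_collatz_two_mul_add_one hA)
  refine ⟨m + 1, (collatz A (2 * m + 1)).natDegree, _, rfl, fun k hk => ?_⟩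
  obtain ⟨j, hj, rfl⟩ : ∃ j, m ≤ j ∧ k = j + 1 := ⟨k - 1, by omega, by omega⟩
  have hℓ : (collatz A (2 * m + 1)).natDegree = (collatz A (2 * j + 1)).natDegree := hm j hj
  have hℓ_succ : (collatz A (2 * m + 1)).natDegree = (collatz A (2 * (j + 1) + 1)).natDegree :=
    hm (j + 1) (by omega)
  have hdeg := natDegree_collatz_two_mul hA (j + 1)
  have hdeg_succ := natDegree_collatz_two_mul_succ hA j
  have hval := one_le_valX_and_valX1_collatz_two_mul_succ hA j
  omega
end

section
/- Let A be a polynomial over F₂ of degree at least 1 with Collatz sequences (A_j). Then there exist a natural number m and a positive integer t with t ≤ deg(A) such that A_{2(m+t)} = A_{2m} and A_{2(m+t)+1} = A_{2m+1}; in particular, the Collatz sequences of A are eventually periodic. -/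
open Polynomial

lemma two_eq_zero' : (1 + 1 : Polynomial (ZMod 2)) = 0 := by
  rw [← Polynomial.C_1, ← C_add]
  norm_num
  decide

lemma Xsub1 : (X : Polynomial (ZMod 2)) - C 1 = X + 1 := by
  rw [Polynomial.C_1, sub_eq_add_neg]
  congr 1
  linear_combination -two_eq_zero'

lemma natDegree_M1 : M1.natDegree = 2 := by
  unfold M1; compute_degree!

lemma M1_ne_zero : M1 ≠ 0 := by
  intro h
  have := natDegree_M1
  rw [h] at this
  simp at this

lemma zmod2_cases (x : ZMod 2) (h : x ≠ 0) : x = 1 := by revert h; revert x; decide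

lemma coprime_X_X1 : IsCoprime (X : Polynomial (ZMod 2)) (X + 1) :=
  ⟨-1, 1, by ring⟩

-- Existence: decomposition of a nonzero S
lemma oddPart_spec {S : Polynomial (ZMod 2)} (hS : S ≠ 0) :
    S = X ^ valX S * (X + 1) ^ valX1 S * oddPart S ∧
      (oddPart S).eval 0 = 1 ∧ (oddPart S).eval 1 = 1 := by
  have h1 : (X : Polynomial (ZMod 2)) ^ valX S ∣ S := by
    have := Polynomial.pow_rootMultiplicity_dvd S (0 : ZMod 2)
    simpa [valX] using this
  have h2 : ((X : Polynomial (ZMod 2)) + 1) ^ valX1 S ∣ S := by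
    have := Polynomial.pow_rootMultiplicity_dvd S (1 : ZMod 2)
    rwa [Xsub1] at this
  have hcop : IsCoprime ((X : Polynomial (ZMod 2)) ^ valX S) ((X + 1) ^ valX1 S) :=
    (coprime_X_X1.pow)
  have hdvd : (X : Polynomial (ZMod 2)) ^ valX S * (X + 1) ^ valX1 S ∣ S :=
    hcop.mul_dvd h1 h2
  obtain ⟨T, hT⟩ := hdvd
  have hden : (X : Polynomial (ZMod 2)) ^ valX S * (X + 1) ^ valX1 S ≠ 0 := by
    apply mul_ne_zero <;> apply pow_ne_zero
    · exact X_ne_zero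
    · intro h
      have := congrArg (Polynomial.eval (0 : ZMod 2)) h
      simp at this
  have hop : oddPart S = T := by
    have hc := EuclideanDomain.mul_div_cancel' hden ⟨T, hT⟩
    exact mul_left_cancel₀ hden (hc.trans hT)
  have hTne : T ≠ 0 := by
    intro h; rw [h, mul_zero] at hT; exact hS hT
  refine ⟨by rw [hop, ← hT], ?_, ?_⟩
  · rw [hop]
    apply zmod2_cases
    intro h0
    have : (X : Polynomial (ZMod 2)) - C 0 ∣ T := dvd_iff_isRoot.mpr h0
    rw [C_0, sub_zero] at this
    have hdd : (X : Polynomial (ZMod 2)) ^ (valX S + 1) ∣ S := by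
      obtain ⟨U, hU⟩ := this
      refine ⟨(X+1) ^ valX1 S * U, ?_⟩
      conv_lhs => rw [hT, hU]
      ring
    have : valX S + 1 ≤ rootMultiplicity 0 S := by
      rw [Polynomial.le_rootMultiplicity_iff hS]
      simpa using hdd
    simp [valX] at this
  · rw [hop]
    apply zmod2_cases
    intro h0
    have : (X : Polynomial (ZMod 2)) - C 1 ∣ T := dvd_iff_isRoot.mpr h0
    rw [Xsub1] at this
    have hdd : ((X : Polynomial (ZMod 2)) + 1) ^ (valX1 S + 1) ∣ S := by
      obtain ⟨U, hU⟩ := this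
      refine ⟨X ^ valX S * U, ?_⟩
      conv_lhs => rw [hT, hU]
      ring
    have : valX1 S + 1 ≤ rootMultiplicity 1 S := by
      rw [Polynomial.le_rootMultiplicity_iff hS, Xsub1]
      exact hdd
    simp [valX1] at this

lemma X_mul_X1 : (X : Polynomial (ZMod 2)) * (X + 1) = M1 + 1 := by
  unfold M1; linear_combination -two_eq_zero'

lemma step_lemma {B : Polynomial (ZMod 2)} (h0 : B.eval 0 = 1) (h1 : B.eval 1 = 1) :
    (oddPart (1 + M1 * B)).eval 0 = 1 ∧ (oddPart (1 + M1 * B)).eval 1 = 1 ∧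
    (oddPart (1 + M1 * B)).natDegree ≤ B.natDegree ∧
    ((oddPart (1 + M1 * B)).natDegree = B.natDegree →
      (M1 + 1) * oddPart (1 + M1 * B) = 1 + M1 * B) := by
  have hB : B ≠ 0 := by
    intro h; rw [h] at h0; simp at h0
  set S := 1 + M1 * B with hSdef
  have hmbd : (M1 * B).natDegree = 2 + B.natDegree := by
    rw [natDegree_mul M1_ne_zero hB, natDegree_M1]
  have hSd : S.natDegree = 2 + B.natDegree := by
    rw [hSdef, natDegree_add_eq_right_of_natDegree_lt, hmbd]
    rw [hmbd, natDegree_one]; omega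
  have hS : S ≠ 0 := by
    intro h; rw [h, natDegree_zero] at hSd; omega
  obtain ⟨hdec, hT0, hT1⟩ := oddPart_spec hS
  have hTne : oddPart S ≠ 0 := by
    intro h; rw [h] at hT0; simp at hT0
  have hSe0 : S.eval 0 = 0 := by
    rw [hSdef]; simp [M1, h0]; decide
  have hSe1 : S.eval 1 = 0 := by
    rw [hSdef]; simp [M1, h1]; decide
  have ha : 1 ≤ valX S := by
    rw [valX]; exact (Polynomial.rootMultiplicity_pos hS).mpr hSe0
  have hb : 1 ≤ valX1 S := by
    rw [valX1]; exact (Polynomial.rootMultiplicity_pos hS).mpr hSe1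
  have hX1ne : ((X : Polynomial (ZMod 2)) + 1) ≠ 0 := by
    intro h
    have := congrArg (Polynomial.eval (0 : ZMod 2)) h
    simp at this
  have hdeg : S.natDegree = valX S + valX1 S + (oddPart S).natDegree := by
    conv_lhs => rw [hdec]
    rw [natDegree_mul (mul_ne_zero (pow_ne_zero _ X_ne_zero) (pow_ne_zero _ hX1ne)) hTne,
      natDegree_mul (pow_ne_zero _ X_ne_zero) (pow_ne_zero _ hX1ne),
      natDegree_pow, natDegree_pow, natDegree_X]
    have : ((X : Polynomial (ZMod 2)) + 1).natDegree = 1 := by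
      rw [← Polynomial.C_1, natDegree_X_add_C]
    rw [this, mul_one, mul_one]
  refine ⟨hT0, hT1, by omega, fun heq => ?_⟩
  have hab : valX S = 1 ∧ valX1 S = 1 := by omega
  conv_rhs => rw [hdec]
  rw [hab.1, hab.2, pow_one, pow_one, X_mul_X1]

lemma collatz_odd_succ (A : Polynomial (ZMod 2)) (k : ℕ) :
    collatz A (2 * k + 1) = oddPart (collatz A (2 * k)) := by
  rw [collatz]
  simp [Nat.mul_mod_right]

lemma collatz_even_succ (A : Polynomial (ZMod 2)) (k : ℕ) :
    collatz A (2 * k + 1 + 1) = 1 + M1 * collatz A (2 * k + 1) := by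
  rw [collatz]
  simp [Nat.add_mod, Nat.mul_mod_right]

lemma collatz_B_rec (A : Polynomial (ZMod 2)) (k : ℕ) :
    collatz A (2 * (k + 1) + 1) = oddPart (1 + M1 * collatz A (2 * k + 1)) := by
  have h : collatz A (2 * (k + 1) + 1) = oddPart (collatz A (2 * (k + 1))) :=
    collatz_odd_succ A (k + 1)
  have h2 : 2 * (k + 1) = 2 * k + 1 + 1 := by ring
  rw [h, h2, collatz_even_succ]

lemma coprime_M1 : IsCoprime M1 (M1 + 1) := ⟨-1, 1, by ring⟩

lemma neg_one_eq : (-1 : Polynomial (ZMod 2)) = 1 := by linear_combination -two_eq_zero'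

/-- the Collatz sequences are eventually periodic: there are `m` and
`1 ≤ t ≤ deg A` with `A_{2(m+t)} = A_{2m}` and `A_{2(m+t)+1} = A_{2m+1}`. -/
theorem collatz_eventually_periodic (A : Polynomial (ZMod 2)) (hA : 1 ≤ A.natDegree) :
    ∃ (m t : ℕ), 0 < t ∧ t ≤ A.natDegree ∧
      collatz A (2 * (m + t)) = collatz A (2 * m) ∧
      collatz A (2 * (m + t) + 1) = collatz A (2 * m + 1) := by
  have hA0 : A ≠ 0 := by
    intro h; rw [h, natDegree_zero] at hA; omega
  set B : ℕ → Polynomial (ZMod 2) := fun k => collatz A (2 * k + 1) with hBdef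
  have hBrec : ∀ k, B (k + 1) = oddPart (1 + M1 * B k) := fun k => collatz_B_rec A k
  -- B 0 is odd
  have hB0 : (B 0).eval 0 = 1 ∧ (B 0).eval 1 = 1 := by
    have : B 0 = oddPart A := by
      show collatz A (2 * 0 + 1) = oddPart A
      have := collatz_odd_succ A 0
      simpa [collatz] using this
    rw [this]
    exact ⟨(oddPart_spec hA0).2.1, (oddPart_spec hA0).2.2⟩
  -- all B k are odd
  have hodd : ∀ k, (B k).eval 0 = 1 ∧ (B k).eval 1 = 1 := by
    intro k
    induction k with
    | zero => exact hB0
    | succ n ih =>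
      rw [hBrec n]
      exact ⟨(step_lemma ih.1 ih.2).1, (step_lemma ih.1 ih.2).2.1⟩
  -- degrees nonincreasing
  have hanti : ∀ k, (B (k + 1)).natDegree ≤ (B k).natDegree := by
    intro k
    rw [hBrec k]
    exact (step_lemma (hodd k).1 (hodd k).2).2.2.1
  have hmono : ∀ i n, (B (i + n)).natDegree ≤ (B i).natDegree := by
    intro i n
    induction n with
    | zero => exact le_rfl
    | succ n ih => exact le_trans (by rw [← Nat.add_assoc]; exact hanti (i + n)) ih
  -- eventual constant degree
  obtain ⟨i, hi⟩ : ∃ i, (B i).natDegree = sInf (Set.range fun k => (B k).natDegree) :=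
    Nat.sInf_mem (Set.range_nonempty _)
  have hconst : ∀ n, (B (i + n)).natDegree = (B i).natDegree := by
    intro n
    refine le_antisymm (hmono i n) ?_
    rw [hi]
    exact Nat.sInf_le ⟨i + n, rfl⟩
  -- step identity for k ≥ i
  have hstep : ∀ n, (M1 + 1) * B (i + n + 1) = 1 + M1 * B (i + n) := by
    intro n
    have h1 := (step_lemma (hodd (i + n)).1 (hodd (i + n)).2).2.2.2
    rw [← hBrec (i + n)] at h1
    apply h1
    have := hconst (n + 1)
    rw [← Nat.add_assoc] at this
    rw [this, hconst n]
  -- telescoping on D k = B k + 1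
  have htel : ∀ n, (M1 + 1) ^ n * (B (i + n) + 1) = M1 ^ n * (B i + 1) := by
    intro n
    induction n with
    | zero => simp
    | succ n ih =>
      have hD : (M1 + 1) * (B (i + n + 1) + 1) = M1 * (B (i + n) + 1) := by
        linear_combination hstep n + two_eq_zero'
      calc (M1 + 1) ^ (n + 1) * (B (i + (n + 1)) + 1)
          = (M1 + 1) ^ n * ((M1 + 1) * (B (i + n + 1) + 1)) := by
            rw [← Nat.add_assoc]; ring
        _ = (M1 + 1) ^ n * (M1 * (B (i + n) + 1)) := by rw [hD]
        _ = M1 * ((M1 + 1) ^ n * (B (i + n) + 1)) := by ring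
        _ = M1 ^ (n + 1) * (B i + 1) := by rw [ih]; ring
  -- M1^n divides B (i+n) + 1
  have hdvd : ∀ n, M1 ^ n ∣ (B (i + n) + 1) := by
    intro n
    have h1 : M1 ^ n ∣ (M1 + 1) ^ n * (B (i + n) + 1) := ⟨B i + 1, htel n⟩
    exact (coprime_M1.pow (n := n) (m := n)).dvd_of_dvd_mul_left h1
  -- choose n large: B (i + n) = 1
  set e := (B i).natDegree with he
  have hBN : B (i + (e + 1)) = 1 := by
    by_contra hne
    have hD : B (i + (e + 1)) + 1 ≠ 0 := by
      intro h
      apply hne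
      have : B (i + (e + 1)) = -1 := eq_neg_of_add_eq_zero_left h
      rw [this, neg_one_eq]
    have hled : (M1 ^ (e + 1)).natDegree ≤ (B (i + (e + 1)) + 1).natDegree :=
      Polynomial.natDegree_le_of_dvd (hdvd (e + 1)) hD
    rw [natDegree_pow, natDegree_M1] at hled
    have : (B (i + (e + 1)) + 1).natDegree ≤ e := by
      refine le_trans (natDegree_add_le _ _) ?_
      simp [hconst (e + 1)]
    omega
  -- once 1, always 1
  have hfix : ∀ k, B k = 1 → B (k + 1) = 1 := by
    intro k hk
    have hs := step_lemma (B := (1 : Polynomial (ZMod 2))) (by simp) (by simp)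
    have hdeg1 : (oddPart (1 + M1 * 1)).natDegree ≤ 0 := by simpa using hs.2.2.1
    have heval : (oddPart (1 + M1 * 1)).eval 0 = 1 := hs.1
    have hC : oddPart (1 + M1 * 1) = Polynomial.C ((oddPart (1 + M1 * 1)).coeff 0) :=
      Polynomial.eq_C_of_natDegree_le_zero hdeg1
    have : oddPart (1 + M1 * 1) = 1 := by
      rw [hC, Polynomial.coeff_zero_eq_eval_zero, heval, Polynomial.C_1]
    rw [hBrec k, hk, this]
  set N := i + (e + 1) with hN
  have hBN1 : B (N + 1) = 1 := hfix N hBN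
  have hBN2 : B (N + 2) = 1 := hfix (N + 1) hBN1
  refine ⟨N + 1, 1, one_pos, hA, ?_, ?_⟩
  · have h1 : collatz A (2 * (N + 1)) = 1 + M1 * B N := by
      show collatz A (2 * (N + 1)) = 1 + M1 * collatz A (2 * N + 1)
      have h2 : 2 * (N + 1) = 2 * N + 1 + 1 := by ring
      rw [h2, collatz_even_succ]
    have h2 : collatz A (2 * (N + 1 + 1)) = 1 + M1 * B (N + 1) := by
      show collatz A (2 * (N + 1 + 1)) = 1 + M1 * collatz A (2 * (N + 1) + 1)
      have h3 : 2 * (N + 1 + 1) = 2 * (N + 1) + 1 + 1 := by ring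
      rw [h3, collatz_even_succ]
    rw [h1, h2, hBN, hBN1]
  · show B (N + 1 + 1) = B (N + 1)
    rw [hBN1]
    exact hBN2
end
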